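/- For every metric space (X,d) and all x, y, x₀ ∈ X, the limit lim_{s→∞} exp(s − (γ_x(s)|γ_y(s))_{γ_{∞,x₀}(s)}) (Gromov products taken in Con(X)) exists and equals d(x,y). Consequently, d is a parabolic visual metric (with parameter e) on the punctured boundary of Con(X) based at the vertical direction [γ_∞]. -/

import Mathlib

/-- The Bonk–Schramm cone distance on `X × (0,∞)`. -/
noncomputable def dCon {X : Type*} [MetricSpace X] (p q : X × ℝ) : ℝ :=
  2 * Real.log ((dist p.1 q.1 + max p.2 q.2) / Real.sqrt (p.2 * q.2))

/-- The Gromov product `(p|p′)_q` in `Con(X)`, with respect to the metric `d_Con`. -/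
noncomputable def gromovCon {X : Type*} [MetricSpace X] (p p' q : X × ℝ) : ℝ :=
  (dCon p q + dCon q p' - dCon p p') / 2

/-!
In `Con(X)` the cone distance unfolds to `2 log (d(x,x') + max t t') - log t - log t'`. Along the
rays `γ_x`, `γ_y` and `γ_{∞,x₀}` at time `s ≥ 0` this gives, with `t = e^{-s}`,
`exp (s - (γ_x(s)|γ_y(s))_{γ_{∞,x₀}(s)}) = (d(x,y) + t) / ((1 + d(x,x₀) t) (1 + d(x₀,y) t))`,
which tends to `d(x,y)` as `t → 0`.
-/

open Real Filter Topology

theorem dCon_eq {X : Type*} [MetricSpace X] {p q : X × ℝ} (hp : 0 < p.2) (hq : 0 < q.2) :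
    dCon p q = 2 * log (dist p.1 q.1 + max p.2 q.2) - log p.2 - log q.2 := by
  have hsum : 0 < dist p.1 q.1 + max p.2 q.2 := by positivity
  rw [dCon, log_div hsum.ne' (by positivity), log_sqrt (mul_pos hp hq).le,
    log_mul hp.ne' hq.ne']
  ring

theorem gromovCon_eq_of_le {X : Type*} [MetricSpace X] (x y x₀ : X) {t T : ℝ} (ht : 0 < t)
    (htT : t ≤ T) :
    gromovCon (x, t) (y, t) (x₀, T) =
      log (dist x x₀ + T) + log (dist x₀ y + T) - log T - log (dist x y + t) := by
  have hT : 0 < T := ht.trans_le htT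
  simp only [gromovCon, dCon_eq (p := (_, t)) (q := (_, _)) ht hT,
    dCon_eq (p := (_, T)) (q := (_, _)) hT ht, dCon_eq (p := (_, t)) (q := (_, t)) ht ht,
    max_eq_right htT, max_eq_left htT, max_self]
  ring

theorem exp_sub_gromovCon_rays {X : Type*} [MetricSpace X] (x y x₀ : X) {s : ℝ} (hs : 0 ≤ s) :
    exp (s - gromovCon (x, exp (-s)) (y, exp (-s)) (x₀, exp s)) =
      (dist x y + exp (-s)) / ((1 + dist x x₀ * exp (-s)) * (1 + dist x₀ y * exp (-s))) := by
  rw [gromovCon_eq_of_le x y x₀ (exp_pos _) (exp_le_exp.2 (by linarith)), log_exp,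
    show ∀ a b c : ℝ, s - (a + b - s - c) = s + s + c - a - b by intros; ring,
    exp_sub, exp_sub, exp_add, exp_add, exp_log (by positivity), exp_log (by positivity),
    exp_log (by positivity), exp_neg]
  field_simp
  ring

/-- For every metric space `(X,d)` and all `x, y, x₀ ∈ X`, the limit
`lim_{s→∞} exp(s − (γ_x(s)|γ_y(s))_{γ_{∞,x₀}(s)})` exists and equals `d(x,y)`.
Consequently `d` is a parabolic visual metric (with parameter `e`) on the punctured
boundary of `Con(X)` based at the vertical direction. -/
theorem stmt_6 {X : Type*} [MetricSpace X] (x y x₀ : X) :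
    Filter.Tendsto
      (fun s : ℝ =>
        Real.exp (s - gromovCon (x, Real.exp (-s)) (y, Real.exp (-s)) (x₀, Real.exp s)))
      Filter.atTop (nhds (dist x y)) := by
  have hlim : Tendsto (fun t : ℝ => (dist x y + t) / ((1 + dist x x₀ * t) * (1 + dist x₀ y * t)))
      (𝓝 0) (𝓝 (dist x y)) := by
    have hcont : ContinuousAt
        (fun t : ℝ => (dist x y + t) / ((1 + dist x x₀ * t) * (1 + dist x₀ y * t))) 0 := by
      fun_prop (disch := norm_num)
    simpa using hcont.tendsto
  refine (hlim.comp tendsto_exp_neg_atTop_nhds_zero).congr' ?_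
  filter_upwards [eventually_ge_atTop 0] with s hs
  exact (exp_sub_gromovCon_rays x y x₀ hs).symm
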